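/- There exists an absolute constant c > 0 such that for every finite connected simple graph G = (V,E), every K ⊆ V of even size |K| = k ≥ 2, and every perfect matching M of K: LP_MTCH(G,K,M) ≥ c · d(G,M) / log₂ k. -/

import Mathlib

/-!
Bourgain's embedding argument. For `S ⊆ K` the map `w ↦ d(w, S)` is `1`-Lipschitz, so its level
sets are cuts that every edge crosses at most once while a pair `{u, v}` is separated by
`|d(u, S) - d(v, S)|` of them: any feasible `x` has value at least `∑_{{u,v} ∈ M} |d(u,S) - d(v,S)|`.
Now sample `S` by keeping each terminal with probability `2^-(j+2)`. If `ρⱼ` is the least radius at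
which both balls around `u` and `v` hold `2^j` terminals (capped at `⌈d(u,v)/2⌉`), then at scale `j`
the expected gap is at least `(ρⱼ₊₁ - ρⱼ)/10`: with probability `≥ 1/10`, `S` misses the small
ball of radius `ρⱼ₊₁ - 1` around one endpoint and hits the ball of radius `ρⱼ` around the other.
The radii telescope to `⌈d(u,v)/2⌉` over `log₂ k + 1 ≤ 2 log₂ k` scales, whence `c = 1/40`.
-/

open Finset
open scoped Classical

variable {V : Type} [Fintype V] [DecidableEq V]

/-- A cut of a graph on vertex set `V`: a nonempty proper subset of the vertices. -/
def IsCut (C : Finset V) : Prop := C.Nonempty ∧ C ≠ Finset.univ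

/-- The unordered pair `e` crosses the cut `C`: exactly one of its endpoints lies in `C`. -/
def Crosses (C : Finset V) (e : Sym2 V) : Prop :=
  ∃ u v, e = s(u, v) ∧ u ∈ C ∧ v ∉ C

/-- `δ(C)`: the edges of `G` with exactly one endpoint in `C`. -/
noncomputable def cutEdges (G : SimpleGraph V) (C : Finset V) : Finset (Sym2 V) :=
  G.edgeFinset.filter (Crosses C)

/-- `M` is a perfect matching of `K`: a collection of disjoint unordered pairs of distinct
vertices partitioning `K`. -/
def IsPerfectMatchingOn (K : Finset V) (M : Finset (Sym2 V)) : Prop :=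
  (∀ p ∈ M, ¬ p.IsDiag) ∧
  (∀ v ∈ K, ∃! p, p ∈ M ∧ v ∈ p) ∧
  (∀ p ∈ M, ∀ v ∈ p, v ∈ K)

/-- `d(G,M) = ∑_{{u,v}∈M} d_G(u,v)`. -/
noncomputable def matchCost (G : SimpleGraph V) (M : Finset (Sym2 V)) : ℕ :=
  ∑ p ∈ M, Sym2.lift ⟨fun u v => G.dist u v, fun _ _ => SimpleGraph.dist_comm⟩ p

/-- The optimum value of `LP_MTCH(G,K,M)`: minimize `∑_{e∈E} x_e` subject to
`∑_{e∈δ(C)} x_e ≥ m(C,M)` (the number of pairs of `M` separated by `C`) for every cut `C`,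
`x ≥ 0`. -/
noncomputable def LPMTCH (G : SimpleGraph V) (M : Finset (Sym2 V)) : ℝ :=
  sInf { y | ∃ x : Sym2 V → ℝ, (∀ e, 0 ≤ x e) ∧
    (∀ C : Finset V, IsCut C →
      ((M.filter (Crosses C)).card : ℝ) ≤ ∑ e ∈ cutEdges G C, x e) ∧
    y = ∑ e ∈ G.edgeFinset, x e }

open SimpleGraph

section DistToSet

variable {α : Type*} {G : SimpleGraph α} {S : Finset α} {w s : α}

noncomputable def distToSet (G : SimpleGraph α) (S : Finset α) (w : α) : ℕ :=
  if h : S.Nonempty then S.inf' h (G.dist w) else 0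

lemma distToSet_le (hs : s ∈ S) : distToSet G S w ≤ G.dist w s := by
  rw [distToSet, dif_pos ⟨s, hs⟩]
  exact inf'_le _ hs

lemma exists_distToSet_eq (hS : S.Nonempty) (w : α) :
    ∃ s ∈ S, distToSet G S w = G.dist w s := by
  rw [distToSet, dif_pos hS]
  exact exists_mem_eq_inf' hS _

lemma distToSet_le_succ_of_adj (hG : G.Connected) {a b : α} (hab : G.Adj a b) :
    distToSet G S a ≤ distToSet G S b + 1 := by
  rcases S.eq_empty_or_nonempty with rfl | hS
  · simp [distToSet]
  obtain ⟨s, hs, hb⟩ := exists_distToSet_eq hS b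
  calc distToSet G S a ≤ G.dist a s := distToSet_le hs
    _ ≤ G.dist a b + G.dist b s := hG.dist_triangle
    _ = distToSet G S b + 1 := by rw [hb, dist_eq_one_iff_adj.mpr hab, add_comm]

end DistToSet

def pairGap {α : Type*} (f : α → ℕ) : Sym2 α → ℕ :=
  Sym2.lift ⟨fun a b => Nat.dist (f a) (f b), fun _ _ => Nat.dist_comm _ _⟩

@[simp]
lemma pairGap_mk {α : Type*} (f : α → ℕ) (a b : α) :
    pairGap f s(a, b) = Nat.dist (f a) (f b) :=
  rfl

lemma crosses_mk_iff {α : Type} {C : Finset α} {a b : α} :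
    Crosses C s(a, b) ↔ a ∈ C ∧ b ∉ C ∨ b ∈ C ∧ a ∉ C := by
  constructor
  · rintro ⟨u, v, h, hu, hv⟩
    rcases Sym2.eq_iff.mp h with ⟨rfl, rfl⟩ | ⟨rfl, rfl⟩
    · exact .inl ⟨hu, hv⟩
    · exact .inr ⟨hu, hv⟩
  · rintro (⟨ha, hb⟩ | ⟨hb, ha⟩)
    · exact ⟨a, b, rfl, ha, hb⟩
    · exact ⟨b, a, Sym2.eq_swap, hb, ha⟩

section LevelCuts

variable {α : Type} [Fintype α]

noncomputable def levelSet (f : α → ℕ) (r : ℕ) : Finset α := univ.filter fun w => f w ≤ r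

lemma card_filter_crosses_levelSet (f : α → ℕ) {T : ℕ} (hT : ∀ w, f w < T) (e : Sym2 α) :
    #{r ∈ range T | Crosses (levelSet f r) e} = pairGap f e := by
  induction e using Sym2.ind with
  | _ a b =>
    have ha := hT a
    have hb := hT b
    have hlevels : {r ∈ range T | Crosses (levelSet f r) s(a, b)} =
        Ico (min (f a) (f b)) (max (f a) (f b)) := by
      ext r
      simp only [mem_filter, mem_range, crosses_mk_iff, levelSet, mem_univ, true_and, mem_Ico]
      omega
    rw [hlevels, Nat.card_Ico, pairGap_mk, Nat.dist]
    omega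

lemma cutEdges_nonempty_of_crosses {G : SimpleGraph α} (hG : G.Connected) {C : Finset α}
    {e : Sym2 α} (he : Crosses C e) : (cutEdges G C).Nonempty := by
  obtain ⟨a, b, -, ha, hb⟩ := he
  obtain ⟨d, -, hd, hd'⟩ := (hG a b).some.exists_boundary_dart (C : Set α) ha hb
  exact ⟨d.edge, mem_filter.mpr ⟨mem_edgeFinset.mpr d.edge_mem, d.fst, d.snd, rfl, hd, hd'⟩⟩

def IsFeasibleLPMTCH (G : SimpleGraph α) (M : Finset (Sym2 α)) (x : Sym2 α → ℝ) : Prop :=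
  (∀ e, 0 ≤ x e) ∧
    ∀ C : Finset α, IsCut C → (#(M.filter (Crosses C)) : ℝ) ≤ ∑ e ∈ cutEdges G C, x e

lemma isFeasibleLPMTCH_const_card {G : SimpleGraph α} (hG : G.Connected) (M : Finset (Sym2 α)) :
    IsFeasibleLPMTCH G M fun _ => (#M : ℝ) := by
  refine ⟨fun _ => Nat.cast_nonneg _, fun C _ => ?_⟩
  rw [sum_const, nsmul_eq_mul]
  rcases (M.filter (Crosses C)).eq_empty_or_nonempty with hnone | ⟨e, he⟩
  · rw [hnone, card_empty, Nat.cast_zero]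
    positivity
  · have hcut : 1 ≤ #(cutEdges G C) :=
      card_pos.mpr (cutEdges_nonempty_of_crosses hG (mem_filter.mp he).2)
    calc (#(M.filter (Crosses C)) : ℝ) ≤ #M := by exact_mod_cast card_filter_le _ _
      _ ≤ #(cutEdges G C) * #M := le_mul_of_one_le_left (by positivity) (by exact_mod_cast hcut)

namespace IsFeasibleLPMTCH

variable {G : SimpleGraph α} {M : Finset (Sym2 α)} {x : Sym2 α → ℝ}

lemma card_filter_crosses_le (hx : IsFeasibleLPMTCH G M x) (C : Finset α) :
    (#(M.filter (Crosses C)) : ℝ) ≤ ∑ e ∈ cutEdges G C, x e := by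
  by_cases hC : IsCut C
  · exact hx.2 C hC
  · have hnone : M.filter (Crosses C) = ∅ :=
      filter_eq_empty_iff.mpr fun _ _ ⟨_, b, _, ha, hb⟩ =>
        hC ⟨⟨_, ha⟩, fun hU => hb (hU ▸ mem_univ b)⟩
    rw [hnone, card_empty, Nat.cast_zero]
    exact sum_nonneg fun e _ => hx.1 e

lemma sum_pairGap_le (hx : IsFeasibleLPMTCH G M x) {f : α → ℕ}
    (hf : ∀ a b, G.Adj a b → f a ≤ f b + 1) :
    ∑ p ∈ M, (pairGap f p : ℝ) ≤ ∑ e ∈ G.edgeFinset, x e := by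
  set T := univ.sup f + 1
  have hT : ∀ w, f w < T := fun w => Nat.lt_succ_of_le (le_sup (mem_univ w))
  have hedge : ∀ e ∈ G.edgeFinset, pairGap f e ≤ 1 := by
    intro e he
    induction e using Sym2.ind with
    | _ a b =>
      have hab : G.Adj a b := mem_edgeFinset.mp he
      have := hf a b hab
      have := hf b a hab.symm
      rw [pairGap_mk, Nat.dist]
      omega
  calc ∑ p ∈ M, (pairGap f p : ℝ)
      = ∑ r ∈ range T, (#(M.filter (Crosses (levelSet f r))) : ℝ) := by
        simp only [← card_filter_crosses_levelSet f hT, card_filter]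
        push_cast
        exact sum_comm
    _ ≤ ∑ r ∈ range T, ∑ e ∈ cutEdges G (levelSet f r), x e :=
        sum_le_sum fun r _ => hx.card_filter_crosses_le _
    _ = ∑ e ∈ G.edgeFinset, (pairGap f e : ℝ) * x e := by
        simp only [cutEdges, sum_filter, ← card_filter_crosses_levelSet f hT, card_filter]
        rw [sum_comm]
        push_cast
        simp only [sum_mul, ite_mul, one_mul, zero_mul]
    _ ≤ ∑ e ∈ G.edgeFinset, x e :=
        sum_le_sum fun e he => mul_le_of_le_one_left (hx.1 e) (by exact_mod_cast hedge e he)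

end IsFeasibleLPMTCH

end LevelCuts

section Bernoulli

variable {α : Type*} {p : ℝ} {K A B : Finset α}

def bernoulliWeight (p : ℝ) (K S : Finset α) : ℝ := p ^ #S * (1 - p) ^ (#K - #S)

lemma bernoulliWeight_nonneg (hp0 : 0 ≤ p) (hp1 : p ≤ 1) (K S : Finset α) :
    0 ≤ bernoulliWeight p K S :=
  mul_nonneg (pow_nonneg hp0 _) (pow_nonneg (sub_nonneg.mpr hp1) _)

lemma sum_bernoulliWeight (p : ℝ) (K : Finset α) : ∑ S ∈ K.powerset, bernoulliWeight p K S = 1 := by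
  simp [bernoulliWeight, sum_pow_mul_eq_add_pow]

lemma sum_bernoulliWeight_disjoint (hA : A ⊆ K) :
    ∑ S ∈ K.powerset with Disjoint S A, bernoulliWeight p K S = (1 - p) ^ #A := by
  have hpow : K.powerset.filter (Disjoint · A) = (K \ A).powerset := by
    ext S
    simp only [mem_filter, mem_powerset, subset_sdiff]
  have hK : #K = #(K \ A) + #A := by
    rw [card_sdiff_of_subset hA]
    have := card_le_card hA
    omega
  rw [hpow]
  calc ∑ S ∈ (K \ A).powerset, bernoulliWeight p K S
      = ∑ S ∈ (K \ A).powerset, (1 - p) ^ #A * (p ^ #S * (1 - p) ^ (#(K \ A) - #S)) := by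
        refine sum_congr rfl fun S hS => ?_
        have hS : #S ≤ #(K \ A) := card_le_card (mem_powerset.mp hS)
        rw [bernoulliWeight, hK, show #(K \ A) + #A - #S = #(K \ A) - #S + #A by omega, pow_add]
        ring
    _ = (1 - p) ^ #A := by rw [← mul_sum, sum_pow_mul_eq_add_pow]; simp

lemma sum_bernoulliWeight_disjoint_not_disjoint (hA : A ⊆ K) (hB : B ⊆ K) (hAB : Disjoint A B) :
    ∑ S ∈ K.powerset with Disjoint S A ∧ ¬Disjoint S B, bernoulliWeight p K S =
      (1 - p) ^ #A * (1 - (1 - p) ^ #B) := by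
  have hsplit := sum_filter_add_sum_filter_not (K.powerset.filter (Disjoint · A))
    (fun S => Disjoint S B) (bernoulliWeight p K)
  simp only [filter_filter, ← disjoint_union_right] at hsplit
  rw [sum_bernoulliWeight_disjoint hA, sum_bernoulliWeight_disjoint (union_subset hA hB),
    card_union_of_disjoint hAB, pow_add] at hsplit
  linarith

lemma mul_sum_bernoulliWeight_filter_le (hp0 : 0 ≤ p) (hp1 : p ≤ 1) {P : Finset α → Prop}
    [DecidablePred P] {g : Finset α → ℝ} (hg0 : ∀ S, 0 ≤ g S) {Δ : ℝ}
    (hg : ∀ S ⊆ K, P S → Δ ≤ g S) :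
    Δ * ∑ S ∈ K.powerset with P S, bernoulliWeight p K S ≤
      ∑ S ∈ K.powerset, bernoulliWeight p K S * g S := by
  rw [mul_sum]
  calc ∑ S ∈ K.powerset with P S, Δ * bernoulliWeight p K S
      ≤ ∑ S ∈ K.powerset with P S, bernoulliWeight p K S * g S := by
        refine sum_le_sum fun S hS => ?_
        obtain ⟨hSK, hPS⟩ := mem_filter.mp hS
        rw [mul_comm]
        exact mul_le_mul_of_nonneg_left (hg S (mem_powerset.mp hSK) hPS)
          (bernoulliWeight_nonneg hp0 hp1 K S)
    _ ≤ ∑ S ∈ K.powerset, bernoulliWeight p K S * g S :=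
        sum_le_sum_of_subset_of_nonneg (filter_subset _ _)
          fun S _ _ => mul_nonneg (bernoulliWeight_nonneg hp0 hp1 K S) (hg0 S)

end Bernoulli

lemma one_tenth_le_one_sub_pow_mul {p : ℝ} {a b : ℕ} (hp0 : 0 ≤ p) (hp1 : p ≤ 1)
    (ha : a * p ≤ 1 / 2) (hb : 1 / 4 ≤ b * p) :
    1 / 10 ≤ (1 - p) ^ a * (1 - (1 - p) ^ b) := by
  have hA : 1 / 2 ≤ (1 - p) ^ a := by
    have := one_add_mul_le_pow (a := -p) (by linarith) a
    rw [← sub_eq_add_neg] at this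
    linarith
  have hB : (1 - p) ^ b ≤ 4 / 5 := by
    have hbern := one_add_mul_le_pow (a := p) (by linarith) b
    have hprod : (1 - p) ^ b * (1 + p) ^ b ≤ 1 := by
      rw [← mul_pow]
      exact pow_le_one₀ (by nlinarith) (by nlinarith)
    have := pow_nonneg (sub_nonneg.mpr hp1) b
    nlinarith
  nlinarith

section BourgainRadius

variable {α : Type*} (G : SimpleGraph α) (K : Finset α) (u v : α) (cap : ℕ)

def IsRichAt (j r : ℕ) : Prop :=
  2 ^ j ≤ #{t ∈ K | G.dist u t ≤ r} ∧ 2 ^ j ≤ #{t ∈ K | G.dist v t ≤ r}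

noncomputable def bourgainRadius (j : ℕ) : ℕ :=
  Nat.find (⟨cap, .inl rfl⟩ : ∃ r, r = cap ∨ IsRichAt G K u v j r)

lemma bourgainRadius_le (j : ℕ) : bourgainRadius G K u v cap j ≤ cap :=
  Nat.find_le (.inl rfl)

variable {G K u v cap}

lemma isRichAt_bourgainRadius {j : ℕ} (h : bourgainRadius G K u v cap j < cap) :
    IsRichAt G K u v j (bourgainRadius G K u v cap j) :=
  (Nat.find_spec (⟨cap, .inl rfl⟩ : ∃ r, r = cap ∨ IsRichAt G K u v j r)).resolve_left h.ne

lemma not_isRichAt_of_lt_bourgainRadius {j r : ℕ} (h : r < bourgainRadius G K u v cap j) :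
    ¬IsRichAt G K u v j r :=
  fun hr => Nat.find_min (⟨cap, .inl rfl⟩ : ∃ r, r = cap ∨ IsRichAt G K u v j r) h (.inr hr)

lemma bourgainRadius_zero (hu : u ∈ K) (hv : v ∈ K) : bourgainRadius G K u v cap 0 = 0 := by
  refine Nat.find_eq_zero _ |>.mpr (.inr ⟨?_, ?_⟩) <;>
    exact card_pos.mpr ⟨_, mem_filter.mpr ⟨‹_›, (dist_self).le⟩⟩

lemma bourgainRadius_eq_cap (hv : v ∈ K) (hcap : cap ≤ G.dist u v) {j : ℕ} (hK : #K ≤ 2 ^ j) :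
    bourgainRadius G K u v cap j = cap := by
  refine (bourgainRadius_le G K u v cap j).antisymm (not_lt.mp fun hlt => ?_)
  have hball : {t ∈ K | G.dist u t ≤ bourgainRadius G K u v cap j} = K :=
    eq_of_subset_of_card_le (filter_subset _ _) (hK.trans (isRichAt_bourgainRadius hlt).1)
  have hvball := hball ▸ hv
  have := (mem_filter.mp hvball).2
  omega

end BourgainRadius

noncomputable def expectedGap {α : Type*} (G : SimpleGraph α) (K : Finset α) (p : ℝ)
    (q : Sym2 α) : ℝ :=
  ∑ S ∈ K.powerset, bernoulliWeight p K S * pairGap (distToSet G S) q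

section ExpectedGap

variable {α : Type*} {G : SimpleGraph α} {K : Finset α} {u v : α}

lemma expectedGap_nonneg {p : ℝ} (hp0 : 0 ≤ p) (hp1 : p ≤ 1) (q : Sym2 α) :
    0 ≤ expectedGap G K p q :=
  sum_nonneg fun S _ => mul_nonneg (bernoulliWeight_nonneg hp0 hp1 K S) (Nat.cast_nonneg _)

lemma le_pairGap_of_disjoint {S : Finset α} (hS : S ⊆ K) {r r' : ℕ}
    (hA : Disjoint S {t ∈ K | G.dist u t ≤ r}) (hB : ¬Disjoint S {t ∈ K | G.dist v t ≤ r'}) :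
    r + 1 - r' ≤ pairGap (distToSet G S) s(u, v) := by
  obtain ⟨s₁, hs₁S, hs₁B⟩ := not_disjoint_iff.mp hB
  have hv : distToSet G S v ≤ r' := (distToSet_le hs₁S).trans (mem_filter.mp hs₁B).2
  obtain ⟨s₀, hs₀S, hs₀⟩ := exists_distToSet_eq (G := G) ⟨s₁, hs₁S⟩ u
  have hu : r < distToSet G S u := by
    rw [hs₀]
    by_contra! hle
    exact disjoint_left.mp hA hs₀S (mem_filter.mpr ⟨hS hs₀S, hle⟩)
  rw [pairGap_mk, Nat.dist]
  omega

lemma le_expectedGap_of_card_ball (hG : G.Connected) {j r r' : ℕ}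
    (hA : #{t ∈ K | G.dist u t ≤ r} < 2 ^ (j + 1)) (hB : 2 ^ j ≤ #{t ∈ K | G.dist v t ≤ r'})
    (huv : r + r' < G.dist u v) :
    ((r + 1 - r' : ℕ) : ℝ) / 10 ≤ expectedGap G K ((1 / 2) ^ (j + 2)) s(u, v) := by
  set p : ℝ := (1 / 2) ^ (j + 2)
  have hp0 : 0 ≤ p := by positivity
  have hp1 : p ≤ 1 := pow_le_one₀ (by norm_num) (by norm_num)
  have hpj : (2 : ℝ) ^ j * p = 1 / 4 := by
    simp only [p, div_pow, one_pow, pow_add]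
    field_simp
    norm_num
  have hdisj : Disjoint {t ∈ K | G.dist u t ≤ r} {t ∈ K | G.dist v t ≤ r'} := by
    refine disjoint_left.mpr fun t htu htv => ?_
    have := (mem_filter.mp htu).2
    have := (mem_filter.mp htv).2
    have : G.dist u v ≤ G.dist u t + G.dist t v := hG.dist_triangle
    rw [dist_comm (u := t)] at this
    omega
  have hprob := one_tenth_le_one_sub_pow_mul hp0 hp1
    (a := #{t ∈ K | G.dist u t ≤ r}) (b := #{t ∈ K | G.dist v t ≤ r'}) (by
      calc (#{t ∈ K | G.dist u t ≤ r} : ℝ) * p ≤ 2 ^ (j + 1) * p := by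
            gcongr
            exact_mod_cast hA.le
        _ = 1 / 2 := by rw [pow_succ, mul_right_comm, hpj]; norm_num) (by
      calc (1 / 4 : ℝ) = 2 ^ j * p := hpj.symm
        _ ≤ #{t ∈ K | G.dist v t ≤ r'} * p := by
            gcongr
            exact_mod_cast hB)
  rw [← sum_bernoulliWeight_disjoint_not_disjoint (filter_subset _ _) (filter_subset _ _) hdisj]
    at hprob
  have hevent := mul_sum_bernoulliWeight_filter_le hp0 hp1 (K := K)
    (P := fun S => Disjoint S {t ∈ K | G.dist u t ≤ r} ∧ ¬Disjoint S {t ∈ K | G.dist v t ≤ r'})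
    (g := fun S => (pairGap (distToSet G S) s(u, v) : ℝ)) (fun S => Nat.cast_nonneg _)
    (Δ := ((r + 1 - r' : ℕ) : ℝ)) fun S hS hP => by exact_mod_cast le_pairGap_of_disjoint hS hP.1 hP.2
  have hΔ : (0 : ℝ) ≤ ((r + 1 - r' : ℕ) : ℝ) := Nat.cast_nonneg _
  unfold expectedGap
  nlinarith

lemma bourgainRadius_succ_sub_le (hG : G.Connected) {cap : ℕ} (hcap : 2 * cap ≤ G.dist u v + 1)
    (j : ℕ) :
    ((bourgainRadius G K u v cap (j + 1) : ℝ) - bourgainRadius G K u v cap j) / 10 ≤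
      expectedGap G K ((1 / 2) ^ (j + 2)) s(u, v) := by
  set ρ := bourgainRadius G K u v cap (j + 1)
  set ρ' := bourgainRadius G K u v cap j
  rcases le_or_gt ρ ρ' with hle | hlt
  · have : (ρ : ℝ) ≤ ρ' := by exact_mod_cast hle
    have := expectedGap_nonneg (G := G) (K := K) (p := (1 / 2) ^ (j + 2)) (by positivity)
      (pow_le_one₀ (by norm_num) (by norm_num)) s(u, v)
    linarith
  have hρ : ρ ≤ cap := bourgainRadius_le G K u v cap (j + 1)
  have hpoor := not_isRichAt_of_lt_bourgainRadius (show ρ - 1 < ρ by omega)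
  have hrich := isRichAt_bourgainRadius (show ρ' < cap by omega)
  have hsum : ρ - 1 + ρ' < G.dist u v := by omega
  have hgap : ((ρ - 1 + 1 - ρ' : ℕ) : ℝ) / 10 ≤ expectedGap G K ((1 / 2) ^ (j + 2)) s(u, v) := by
    rcases not_and_or.mp hpoor with hu | hv
    · exact le_expectedGap_of_card_ball hG (not_le.mp hu) hrich.2 hsum
    · rw [Sym2.eq_swap]
      exact le_expectedGap_of_card_ball hG (not_le.mp hv) hrich.1 (by rwa [dist_comm])
  rwa [Nat.sub_add_cancel (by omega), Nat.cast_sub hlt.le] at hgap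

lemma dist_le_sum_expectedGap (hG : G.Connected) (hu : u ∈ K) (hv : v ∈ K) {L : ℕ}
    (hL : #K ≤ 2 ^ L) :
    (G.dist u v : ℝ) ≤ 20 * ∑ j ∈ range L, expectedGap G K ((1 / 2) ^ (j + 2)) s(u, v) := by
  set cap := (G.dist u v + 1) / 2
  have htel : ∑ j ∈ range L, ((bourgainRadius G K u v cap (j + 1) : ℝ) -
      bourgainRadius G K u v cap j) = cap := by
    rw [sum_range_sub (fun j => (bourgainRadius G K u v cap j : ℝ)),
      bourgainRadius_eq_cap hv (by omega) hL, bourgainRadius_zero hu hv, Nat.cast_zero, sub_zero]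
  have hcap : (cap : ℝ) / 10 ≤ ∑ j ∈ range L, expectedGap G K ((1 / 2) ^ (j + 2)) s(u, v) := by
    rw [← htel, sum_div]
    exact sum_le_sum fun j _ => bourgainRadius_succ_sub_le hG (by omega) j
  have hd : (G.dist u v : ℝ) ≤ 2 * cap := by exact_mod_cast (by omega : G.dist u v ≤ 2 * cap)
  linarith

end ExpectedGap

lemma IsFeasibleLPMTCH.sum_expectedGap_le {α : Type} [Fintype α] {G : SimpleGraph α}
    (hG : G.Connected) {M : Finset (Sym2 α)} {x : Sym2 α → ℝ} (hx : IsFeasibleLPMTCH G M x)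
    (K : Finset α) {p : ℝ} (hp0 : 0 ≤ p) (hp1 : p ≤ 1) :
    ∑ q ∈ M, expectedGap G K p q ≤ ∑ e ∈ G.edgeFinset, x e := by
  calc ∑ q ∈ M, expectedGap G K p q
      = ∑ S ∈ K.powerset, bernoulliWeight p K S * ∑ q ∈ M, (pairGap (distToSet G S) q : ℝ) := by
        simp only [expectedGap, mul_sum]
        exact sum_comm
    _ ≤ ∑ S ∈ K.powerset, bernoulliWeight p K S * ∑ e ∈ G.edgeFinset, x e :=
        sum_le_sum fun S _ => mul_le_mul_of_nonneg_left
          (hx.sum_pairGap_le fun _ _ hab => distToSet_le_succ_of_adj hG hab)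
          (bernoulliWeight_nonneg hp0 hp1 K S)
    _ = ∑ e ∈ G.edgeFinset, x e := by rw [← sum_mul, sum_bernoulliWeight, one_mul]

lemma IsFeasibleLPMTCH.matchCost_le {α : Type} [Fintype α] {G : SimpleGraph α}
    (hG : G.Connected) {K : Finset α} {M : Finset (Sym2 α)} (hMK : ∀ q ∈ M, ∀ v ∈ q, v ∈ K)
    {x : Sym2 α → ℝ} (hx : IsFeasibleLPMTCH G M x) {L : ℕ} (hL : #K ≤ 2 ^ L) :
    (matchCost G M : ℝ) ≤ 20 * L * ∑ e ∈ G.edgeFinset, x e := by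
  have hpair : ∀ q ∈ M, ((Sym2.lift ⟨fun u v => G.dist u v, fun _ _ => dist_comm⟩ q : ℕ) : ℝ) ≤
      20 * ∑ j ∈ range L, expectedGap G K ((1 / 2) ^ (j + 2)) q := by
    intro q hq
    induction q using Sym2.ind with
    | _ u v =>
      exact dist_le_sum_expectedGap hG (hMK _ hq u (Sym2.mem_mk_left u v))
        (hMK _ hq v (Sym2.mem_mk_right u v)) hL
  calc (matchCost G M : ℝ)
      ≤ ∑ q ∈ M, 20 * ∑ j ∈ range L, expectedGap G K ((1 / 2) ^ (j + 2)) q := by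
        rw [matchCost, Nat.cast_sum]
        exact sum_le_sum hpair
    _ = 20 * ∑ j ∈ range L, ∑ q ∈ M, expectedGap G K ((1 / 2) ^ (j + 2)) q := by
        rw [← mul_sum, sum_comm]
    _ ≤ 20 * ∑ j ∈ range L, ∑ e ∈ G.edgeFinset, x e := by
        gcongr with j
        exact hx.sum_expectedGap_le hG K (by positivity) (pow_le_one₀ (by norm_num) (by norm_num))
    _ = 20 * L * ∑ e ∈ G.edgeFinset, x e := by
        rw [sum_const, card_range, nsmul_eq_mul, mul_assoc]

/-- There is an absolute constant `c > 0` such that for every finite connected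
simple graph `G`, every `K ⊆ V` of even size `k ≥ 2` and every perfect matching `M` of `K`,
`LP_MTCH(G,K,M) ≥ c · d(G,M) / log₂ k`. -/
theorem statement8 :
    ∃ c : ℝ, 0 < c ∧
      ∀ (V : Type) [Fintype V] [DecidableEq V] (G : SimpleGraph V),
        G.Connected →
        ∀ K : Finset V, Even K.card → 2 ≤ K.card →
          ∀ M : Finset (Sym2 V), IsPerfectMatchingOn K M →
            c * (matchCost G M : ℝ) / Real.logb 2 (K.card : ℝ) ≤ LPMTCH G M := by
  refine ⟨1 / 40, by norm_num, fun V _ _ G hG K _ hK2 M hM => ?_⟩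
  have hlog : 1 ≤ Real.logb 2 (#K : ℝ) := by
    rw [Real.le_logb_iff_rpow_le one_lt_two (by positivity), Real.rpow_one]
    exact_mod_cast hK2
  have hL : ((Nat.log 2 #K + 1 : ℕ) : ℝ) ≤ 2 * Real.logb 2 #K := by
    have := Real.natLog_le_logb #K 2
    push_cast at this ⊢
    linarith
  have hfeas := isFeasibleLPMTCH_const_card hG M
  refine le_csInf ⟨_, _, hfeas.1, hfeas.2, rfl⟩ ?_
  rintro _ ⟨x, hx0, hxC, rfl⟩
  have hcost := IsFeasibleLPMTCH.matchCost_le hG hM.2.2 ⟨hx0, hxC⟩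
    (Nat.lt_pow_succ_log_self one_lt_two #K).le
  have hX : 0 ≤ ∑ e ∈ G.edgeFinset, x e := sum_nonneg fun e _ => hx0 e
  rw [div_le_iff₀ (by linarith)]
  nlinarith
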